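/- arXiv:2305.06612 — 2 statements merged into one kernel-verified Lean document; each statement's English description precedes it below -/
import Mathlib

section
/- For every complex number ζ with Im ζ ≠ 0, the plasma dispersion function satisfies the bound |Z(ζ)| ≤ √(π/2). -/
open MeasureTheory

/-- The plasma dispersion function `Z(ζ) = (1/√(2π)) ∫_ℝ e^{-v²/2}/(v-ζ) dv`. -/
noncomputable def plasmaZ (ζ : ℂ) : ℂ :=
  (Real.sqrt (2 * Real.pi) : ℂ)⁻¹ *
    ∫ v : ℝ, Complex.exp (-(v : ℂ) ^ 2 / 2) / ((v : ℂ) - ζ)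

/-!
For `Im ζ < 0` write `1/(v - ζ) = -i ∫₀^∞ e^{it(v-ζ)} dt` and swap the integrals: the inner
`v`-integral is the Fourier transform of the Gaussian, `√(2π) e^{-t²/2}`, so
`Z(ζ) = -i ∫₀^∞ e^{-itζ} e^{-t²/2} dt`. Since `|e^{-itζ}| = e^{t Im ζ} ≤ 1` for `t > 0`,
`|Z(ζ)| ≤ ∫₀^∞ e^{-t²/2} dt = √(π/2)`. The case `Im ζ > 0` follows from `Z(ζ̄) = conj Z(ζ)`.
-/

open Complex ComplexConjugate Set

lemma integral_Ioi_cexp_I_mul {w : ℂ} (hw : 0 < w.im) :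
    ∫ t in Ioi (0 : ℝ), cexp (I * w * t) = I / w := by
  have hw0 : w ≠ 0 := fun h => by simp [h] at hw
  rw [integral_exp_mul_complex_Ioi (by simpa using hw) 0]
  field_simp
  simp

lemma integral_div_sub_eq_integral_Ioi {g : ℝ → ℂ} (hg : Integrable g) {ζ : ℂ}
    (hζ : ζ.im < 0) :
    ∫ v : ℝ, g v / (v - ζ) =
      -I * ∫ t in Ioi (0 : ℝ), cexp (-I * ζ * t) * ∫ v : ℝ, cexp (I * t * v) * g v := by
  set F : ℝ → ℝ → ℂ := fun v t => -I * cexp (-I * ζ * t) * cexp (I * t * v) * g v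
  have hF_eq : ∀ v t : ℝ, F v t = -I * cexp (I * (v - ζ) * t) * g v := by
    intro v t
    simp only [F, mul_assoc, ← Complex.exp_add]
    ring_nf
  have hF_int : Integrable (Function.uncurry F) (volume.prod (volume.restrict (Ioi 0))) := by
    have hexp : IntegrableOn (fun t : ℝ => Real.exp (ζ.im * t)) (Ioi 0) := by
      simpa using exp_neg_integrableOn_Ioi 0 (neg_pos.mpr hζ)
    refine (hg.norm.mul_prod hexp).mono' ?_ (ae_of_all _ fun ⟨v, t⟩ => ?_)
    · exact (by fun_prop : Continuous fun p : ℝ × ℝ => -I * cexp (-I * ζ * p.2) *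
        cexp (I * p.2 * p.1)).aestronglyMeasurable.mul hg.aestronglyMeasurable.comp_fst
    · simp [Function.uncurry, hF_eq, norm_exp, mul_comm]
  calc ∫ v : ℝ, g v / (v - ζ)
      = ∫ v : ℝ, ∫ t in Ioi (0 : ℝ), F v t := by
        refine integral_congr_ae (ae_of_all _ fun v => ?_)
        have hv : 0 < ((v : ℂ) - ζ).im := by simpa using hζ
        simp only [hF_eq, integral_const_mul, integral_mul_const, integral_Ioi_cexp_I_mul hv]
        field_simp
        simp [I_sq, neg_div]
    _ = ∫ t in Ioi (0 : ℝ), ∫ v : ℝ, F v t := integral_integral_swap hF_int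
    _ = _ := by simp only [F, integral_const_mul, mul_assoc]

lemma norm_integral_Ioi_cexp_mul_le {ζ : ℂ} (hζ : ζ.im ≤ 0) {f : ℝ → ℂ}
    (hf : IntegrableOn f (Ioi 0)) :
    ‖∫ t in Ioi (0 : ℝ), cexp (-I * ζ * t) * f t‖ ≤ ∫ t in Ioi (0 : ℝ), ‖f t‖ := by
  refine norm_integral_le_of_norm_le hf.norm ?_
  filter_upwards [ae_restrict_mem measurableSet_Ioi] with t (ht : 0 < t)
  rw [norm_mul, norm_exp]
  refine mul_le_of_le_one_left (norm_nonneg _) (Real.exp_le_one_iff.mpr ?_)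
  simpa using mul_nonpos_of_nonpos_of_nonneg hζ ht.le

lemma integrable_cexp_neg_sq_div_two : Integrable fun v : ℝ => cexp (-(v : ℂ) ^ 2 / 2) := by
  simpa [neg_div, div_eq_inv_mul] using integrable_cexp_neg_mul_sq (b := 1 / 2) (by norm_num)

lemma integral_cexp_I_mul_mul_cexp_neg_sq_div_two (t : ℝ) :
    ∫ v : ℝ, cexp (I * t * v) * cexp (-(v : ℂ) ^ 2 / 2) =
      Real.sqrt (2 * Real.pi) * cexp (-(t : ℂ) ^ 2 / 2) := by
  have h := fourierIntegral_gaussian (b := 1 / 2) (by norm_num) t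
  have hsqrt : ((Real.pi : ℂ) / (1 / 2)) ^ (1 / 2 : ℂ) = (Real.sqrt (2 * Real.pi) : ℂ) := by
    rw [Real.sqrt_eq_rpow, ofReal_cpow (by positivity)]
    push_cast
    ring_nf
  rw [hsqrt] at h
  convert h using 3 <;> ring_nf

lemma plasmaZ_eq_integral_Ioi {ζ : ℂ} (hζ : ζ.im < 0) :
    plasmaZ ζ = -I * ∫ t in Ioi (0 : ℝ), cexp (-I * ζ * t) * cexp (-(t : ℂ) ^ 2 / 2) := by
  have hsqrt : (Real.sqrt (2 * Real.pi) : ℂ) ≠ 0 := by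
    exact_mod_cast (Real.sqrt_pos.mpr (by positivity)).ne'
  simp only [plasmaZ, integral_div_sub_eq_integral_Ioi integrable_cexp_neg_sq_div_two hζ,
    integral_cexp_I_mul_mul_cexp_neg_sq_div_two, integral_const_mul,
    mul_left_comm _ (Real.sqrt (2 * Real.pi) : ℂ)]
  field_simp

lemma norm_plasmaZ_le_of_im_neg {ζ : ℂ} (hζ : ζ.im < 0) :
    ‖plasmaZ ζ‖ ≤ Real.sqrt (Real.pi / 2) :=
  calc ‖plasmaZ ζ‖ ≤ ∫ t in Ioi (0 : ℝ), ‖cexp (-(t : ℂ) ^ 2 / 2)‖ := by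
        rw [plasmaZ_eq_integral_Ioi hζ, norm_mul, norm_neg, norm_I, one_mul]
        exact norm_integral_Ioi_cexp_mul_le hζ.le integrable_cexp_neg_sq_div_two.integrableOn
    _ = ∫ t in Ioi (0 : ℝ), Real.exp (-(1 / 2) * t ^ 2) := by
        congr 1 with t
        rw [norm_exp]
        norm_cast
        ring_nf
    _ = Real.sqrt (Real.pi / 2) := by
        rw [integral_gaussian_Ioi, show Real.pi / (1 / 2) = 2 ^ 2 * (Real.pi / 2) by ring,
          Real.sqrt_mul (by positivity), Real.sqrt_sq zero_le_two]
        ring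

lemma plasmaZ_conj (ζ : ℂ) : plasmaZ (conj ζ) = conj (plasmaZ ζ) := by
  simp only [plasmaZ, map_mul, map_inv₀, conj_ofReal, ← integral_conj, map_div₀, ← exp_conj,
    map_sub, map_neg, map_pow, map_ofNat]

/-- For every `ζ` with nonzero imaginary part, `|Z(ζ)| ≤ √(π/2)`. -/
theorem plasmaZ_abs_le (ζ : ℂ) (hζ : ζ.im ≠ 0) :
    ‖plasmaZ ζ‖ ≤ Real.sqrt (Real.pi / 2) := by
  rcases hζ.lt_or_gt with hneg | hpos
  · exact norm_plasmaZ_le_of_im_neg hneg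
  · rw [← conj_conj ζ, plasmaZ_conj, norm_conj]
    exact norm_plasmaZ_le_of_im_neg (by simpa using hpos)
end

section
/- Let P(w) = Σ_{n=0}^N P_n H_n(w) be a polynomial expanded in probabilists' Hermite polynomials, and write Z^{(n)}(ζ) = p_n(ζ) + (-1)^n H_n(ζ) Z(ζ). Then for every ζ ∈ ℂ \ ℝ, ∫_ℝ P(w) e^{-w²/2}/(w-ζ) dw / √(2π) = P(ζ) Z(ζ) + Σ_{n=0}^N P_n (-1)^n p_n(ζ). -/
open MeasureTheory Finset

/-- Evaluation of the `n`-th probabilists' Hermite polynomial at a complex number. -/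
noncomputable def hermiteC (n : ℕ) (ζ : ℂ) : ℂ :=
  (Polynomial.hermite n).eval₂ (Int.castRingHom ℂ) ζ

/-!
With `φₙ(w) = Hₙ(w) e^{-w²/2}` one has `φₙ' = -φₙ₊₁`, since `Hₙ₊₁ = X Hₙ - Hₙ'`. Differentiating
the Cauchy transform `Kₙ(ζ) = ∫ φₙ(w)/(w-ζ) dw` under the integral sign and integrating by parts
gives `Kₙ' = -Kₙ₊₁` off the real axis, and `K₀ = √(2π) Z`; hence `Kₙ = √(2π) (-1)ⁿ Z⁽ⁿ⁾`
`= √(2π) ((-1)ⁿ pₙ + Hₙ Z)`. The theorem is the linear combination `Σ Pₙ Kₙ` of these identities.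
-/

open Polynomial Filter Topology Set

theorem iteratedDeriv_eqOn_of_hasDerivAt {𝕜 E : Type*} [NontriviallyNormedField 𝕜]
    [NormedAddCommGroup E] [NormedSpace 𝕜 E] {U : Set 𝕜} (hU : IsOpen U) {F : ℕ → 𝕜 → E}
    (hF : ∀ n, ∀ z ∈ U, HasDerivAt (F n) (F (n + 1) z) z) (n : ℕ) :
    EqOn (iteratedDeriv n (F 0)) (F n) U := by
  induction n with
  | zero => exact fun z _ => rfl
  | succ n ih =>
    intro z hz
    rw [iteratedDeriv_succ, (eventuallyEq_of_mem (hU.mem_nhds hz) ih).deriv_eq]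
    exact (hF n z hz).deriv

theorem abs_im_le_norm_ofReal_sub (w : ℝ) (z : ℂ) : |z.im| ≤ ‖(w : ℂ) - z‖ := by
  simpa using Complex.abs_im_le_norm ((w : ℂ) - z)

theorem ofReal_sub_ne_zero (w : ℝ) {z : ℂ} (hz : z.im ≠ 0) : (w : ℂ) - z ≠ 0 := fun h =>
  hz (by simpa using congrArg Complex.im h)

section CauchyTransform

variable {f f' : ℝ → ℂ} {ζ : ℂ}

noncomputable def cauchyTransform (f : ℝ → ℂ) (ζ : ℂ) : ℂ :=
  ∫ w : ℝ, f w / ((w : ℂ) - ζ)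

theorem norm_div_ofReal_sub_pow_le (c : ℂ) (w : ℝ) {z : ℂ} {δ : ℝ} (hδ : 0 < δ)
    (hz : δ ≤ |z.im|) (k : ℕ) : ‖c / ((w : ℂ) - z) ^ k‖ ≤ ‖c‖ / δ ^ k := by
  rw [norm_div, norm_pow]
  gcongr
  exact hz.trans (abs_im_le_norm_ofReal_sub w z)

theorem aestronglyMeasurable_div_ofReal_sub_pow (hf : Integrable f) (z : ℂ) (k : ℕ) :
    AEStronglyMeasurable (fun w : ℝ => f w / ((w : ℂ) - z) ^ k) := by
  simp only [div_eq_mul_inv]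
  exact hf.aestronglyMeasurable.mul (by fun_prop)

theorem integrable_div_ofReal_sub_pow (hf : Integrable f) (hζ : ζ.im ≠ 0) (k : ℕ) :
    Integrable fun w : ℝ => f w / ((w : ℂ) - ζ) ^ k :=
  (hf.norm.div_const _).mono' (aestronglyMeasurable_div_ofReal_sub_pow hf ζ k) <|
    .of_forall fun w => norm_div_ofReal_sub_pow_le _ w (abs_pos.mpr hζ) le_rfl k

theorem hasDerivAt_cauchyTransform_of_integrable (hf : Integrable f) (hζ : ζ.im ≠ 0) :
    HasDerivAt (cauchyTransform f) (∫ w : ℝ, f w / ((w : ℂ) - ζ) ^ 2) ζ := by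
  set δ := |ζ.im| / 2
  have hδ : 0 < δ := by positivity
  have hs : {z : ℂ | δ < |z.im|} ∈ 𝓝 ζ :=
    (isOpen_lt continuous_const (continuous_abs.comp Complex.continuous_im)).mem_nhds
      (by simp [δ, abs_pos.mpr hζ])
  refine (hasDerivAt_integral_of_dominated_loc_of_deriv_le hs
    (.of_forall fun z => by simpa using aestronglyMeasurable_div_ofReal_sub_pow hf z 1)
    (by simpa using integrable_div_ofReal_sub_pow hf hζ 1)
    (aestronglyMeasurable_div_ofReal_sub_pow hf ζ 2)
    (.of_forall fun w z hz => norm_div_ofReal_sub_pow_le (f w) w hδ (le_of_lt hz) 2)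
    (hf.norm.div_const _) (.of_forall fun w z hz => ?_)).2
  have hne : (w : ℂ) - z ≠ 0 := ofReal_sub_ne_zero w (abs_pos.mp (hδ.trans hz))
  refine ((hasDerivAt_const z (f w)).div ((hasDerivAt_id z).const_sub (w : ℂ)) hne).congr_deriv ?_
  simp

theorem integral_div_ofReal_sub_sq (hderiv : ∀ w, HasDerivAt f (f' w) w) (hf : Integrable f)
    (hf' : Integrable f') (hζ : ζ.im ≠ 0) :
    ∫ w : ℝ, f w / ((w : ℂ) - ζ) ^ 2 = cauchyTransform f' ζ := by
  have hquot (w : ℝ) : HasDerivAt (fun x : ℝ => f x / ((x : ℂ) - ζ))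
      (f' w / ((w : ℂ) - ζ) - f w / ((w : ℂ) - ζ) ^ 2) w := by
    have hden : HasDerivAt (fun x : ℝ => (x : ℂ) - ζ) 1 w :=
      ((hasDerivAt_id (w : ℂ)).sub_const ζ).comp_ofReal
    refine ((hderiv w).div hden (ofReal_sub_ne_zero w hζ)).congr_deriv ?_
    field_simp
  have hf₁ : Integrable fun w : ℝ => f w / ((w : ℂ) - ζ) := by
    simpa using integrable_div_ofReal_sub_pow hf hζ 1
  have hf'₁ : Integrable fun w : ℝ => f' w / ((w : ℂ) - ζ) := by
    simpa using integrable_div_ofReal_sub_pow hf' hζ 1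
  have hf₂ := integrable_div_ofReal_sub_pow hf hζ 2
  have hzero := integral_eq_zero_of_hasDerivAt_of_integrable hquot (hf'₁.sub hf₂) hf₁
  rw [integral_sub hf'₁ hf₂, sub_eq_zero] at hzero
  exact hzero.symm

theorem hasDerivAt_cauchyTransform (hderiv : ∀ w, HasDerivAt f (f' w) w) (hf : Integrable f)
    (hf' : Integrable f') (hζ : ζ.im ≠ 0) :
    HasDerivAt (cauchyTransform f) (cauchyTransform f' ζ) ζ :=
  integral_div_ofReal_sub_sq hderiv hf hf' hζ ▸ hasDerivAt_cauchyTransform_of_integrable hf hζ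

end CauchyTransform

theorem hasDerivAt_hermiteC (n : ℕ) (z : ℂ) :
    HasDerivAt (hermiteC n) (z * hermiteC n z - hermiteC (n + 1) z) z := by
  have hmap (m : ℕ) : hermiteC m = fun z => ((hermite m).map (Int.castRingHom ℂ)).eval z := by
    ext z; simp [hermiteC, eval_map]
  simp only [hmap]
  refine (((hermite n).map (Int.castRingHom ℂ)).hasDerivAt z).congr_deriv ?_
  simp [hermite_succ, derivative_map]

theorem integrable_eval_mul_cexp_neg_sq (Q : ℂ[X]) :
    Integrable fun w : ℝ => Q.eval (w : ℂ) * Complex.exp (-(w : ℂ) ^ 2 / 2) := by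
  induction Q using Polynomial.induction_on' with
  | add p q hp hq => simpa only [eval_add, add_mul, Pi.add_def] using hp.add hq
  | monomial j a =>
    have hreal : Integrable fun w : ℝ => w ^ j * Real.exp (-w ^ 2 / 2) := by
      have hj : (-1 : ℝ) < j := by linarith [j.cast_nonneg (α := ℝ)]
      simpa [Real.rpow_natCast, neg_div, div_eq_inv_mul] using
        integrable_rpow_mul_exp_neg_mul_sq (b := 1 / 2) (by norm_num) hj
    simpa [mul_assoc, Complex.ofReal_exp] using (hreal.ofReal (𝕜 := ℂ)).const_mul a

noncomputable def hermiteFunction (n : ℕ) (w : ℝ) : ℂ :=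
  hermiteC n w * Complex.exp (-(w : ℂ) ^ 2 / 2)

theorem integrable_hermiteFunction (n : ℕ) : Integrable (hermiteFunction n) := by
  have h := integrable_eval_mul_cexp_neg_sq ((hermite n).map (Int.castRingHom ℂ))
  simp only [eval_map] at h
  exact h

theorem hasDerivAt_hermiteFunction (n : ℕ) (w : ℝ) :
    HasDerivAt (hermiteFunction n) (-hermiteFunction (n + 1) w) w := by
  have hgauss : HasDerivAt (fun z : ℂ => Complex.exp (-z ^ 2 / 2))
      (-(w : ℂ) * Complex.exp (-(w : ℂ) ^ 2 / 2)) w := by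
    refine (HasDerivAt.cexp ((hasDerivAt_pow 2 (w : ℂ)).neg.div_const 2)).congr_deriv ?_
    simp only [Pi.neg_apply]
    push_cast
    ring
  refine (((hasDerivAt_hermiteC n w).mul hgauss).comp_ofReal).congr_deriv ?_
  simp only [hermiteFunction]
  ring

theorem cauchyTransform_hermiteFunction (n : ℕ) {ζ : ℂ} (hζ : ζ.im ≠ 0) :
    (Real.sqrt (2 * Real.pi) : ℂ)⁻¹ * cauchyTransform (hermiteFunction n) ζ =
      (-1) ^ n * iteratedDeriv n plasmaZ ζ := by
  set c := (Real.sqrt (2 * Real.pi) : ℂ)⁻¹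
  set F : ℕ → ℂ → ℂ := fun m z => (-1) ^ m * (c * cauchyTransform (hermiteFunction m) z)
  have hF₀ : F 0 = plasmaZ := by
    funext z
    simp [F, c, plasmaZ, cauchyTransform, hermiteFunction, hermiteC]
  have hF (m : ℕ) : ∀ z ∈ {z : ℂ | z.im ≠ 0}, HasDerivAt (F m) (F (m + 1) z) z := fun z hz =>
    have h := hasDerivAt_cauchyTransform (hasDerivAt_hermiteFunction m)
      (integrable_hermiteFunction m) (integrable_hermiteFunction (m + 1)).neg hz
    ((h.const_mul c).const_mul ((-1) ^ m)).congr_deriv <| by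
      simp [F, cauchyTransform, neg_div, integral_neg, pow_succ]
  have hn := iteratedDeriv_eqOn_of_hasDerivAt
    (isOpen_ne_fun Complex.continuous_im continuous_const) hF n hζ
  rw [hF₀] at hn
  rw [hn, ← mul_assoc, ← mul_pow]
  simp

/-- If `P(w) = Σ_{n≤N} P_n H_n(w)` and `Z⁽ⁿ⁾ = p_n + (-1)ⁿ H_n Z`, then
`(1/√(2π)) ∫ P(w) e^{-w²/2}/(w-ζ) dw = P(ζ) Z(ζ) + Σ_{n≤N} P_n (-1)ⁿ p_n(ζ)`. -/
theorem hermite_expansion_integral (N : ℕ) (P : ℕ → ℂ) (p : ℕ → ℂ → ℂ)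
    (hp : ∀ n, n ≤ N → ∀ ζ : ℂ, ζ.im ≠ 0 →
      iteratedDeriv n plasmaZ ζ = p n ζ + (-1) ^ n * hermiteC n ζ * plasmaZ ζ) :
    ∀ ζ : ℂ, ζ.im ≠ 0 →
      (Real.sqrt (2 * Real.pi) : ℂ)⁻¹ *
        (∫ w : ℝ, (∑ n ∈ range (N + 1), P n * hermiteC n (w : ℂ)) *
          Complex.exp (-(w : ℂ) ^ 2 / 2) / ((w : ℂ) - ζ)) =
      (∑ n ∈ range (N + 1), P n * hermiteC n ζ) * plasmaZ ζ +
        ∑ n ∈ range (N + 1), P n * (-1) ^ n * p n ζ := by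
  intro ζ hζ
  have hintegrand (w : ℝ) : (∑ n ∈ range (N + 1), P n * hermiteC n (w : ℂ)) *
      Complex.exp (-(w : ℂ) ^ 2 / 2) / ((w : ℂ) - ζ) =
      ∑ n ∈ range (N + 1), P n * (hermiteFunction n w / ((w : ℂ) - ζ)) := by
    simp only [sum_mul, sum_div, hermiteFunction, mul_assoc, mul_div_assoc]
  have hterm (n : ℕ) (hn : n ∈ range (N + 1)) :
      (Real.sqrt (2 * Real.pi) : ℂ)⁻¹ *
        ∫ w : ℝ, P n * (hermiteFunction n w / ((w : ℂ) - ζ)) =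
      P n * hermiteC n ζ * plasmaZ ζ + P n * (-1) ^ n * p n ζ := by
    have hsign : ((-1 : ℂ) ^ n) * (-1) ^ n = 1 := by rw [← mul_pow]; norm_num
    rw [integral_const_mul]
    change _ * (P n * cauchyTransform (hermiteFunction n) ζ) = _
    linear_combination P n * cauchyTransform_hermiteFunction n hζ +
      P n * (-1) ^ n * hp n (Nat.lt_succ_iff.mp (mem_range.mp hn)) ζ hζ +
      P n * hermiteC n ζ * plasmaZ ζ * hsign
  have hint (n : ℕ) : Integrable fun w : ℝ => P n * (hermiteFunction n w / ((w : ℂ) - ζ)) := by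
    simpa using (integrable_div_ofReal_sub_pow (integrable_hermiteFunction n) hζ 1).const_mul (P n)
  simp_rw [hintegrand]
  rw [integral_finsetSum _ fun n _ => hint n, mul_sum, sum_congr rfl hterm, sum_add_distrib,
    sum_mul]
end
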